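/- Consider V = ℝ × M with g = −dt² + γ. If (M, γ) is not complete, pick an inextendible unit-speed geodesic c : [0, δ) → M with δ < ∞, times t₁ < t₂ with δ < (t₂ − t₁)/2, and suppose V is such that the causal diamond J⁺((−t₁, c(0))) ∩ J⁻((t₂, c(0))) is compact. Then the curve s ↦ (s − t₁, c(s)), which lies in this diamond, has compact closure, contradicting the noncompactness of the closure of c([0, δ)) in M. Hence global hyperbolicity of (V, g) implies completeness of (M, γ). -/

import Mathlib

open Set

/-- The causal relation of the product spacetime `(ℝ × M, −dt² + γ)`: `u ≼ v` iff they are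
joined by a curve whose spatial projection (parametrized by `t`) is `1`-Lipschitz for the
Riemannian distance `d_γ` of `(M, γ)`. -/
def causalLE {M : Type*} [MetricSpace M] (u v : ℝ × M) : Prop :=
  u.1 ≤ v.1 ∧ ∃ x : ℝ → M, x u.1 = u.2 ∧ x v.1 = v.2 ∧
    LipschitzOnWith 1 x (Icc u.1 v.1)

/-- A unit-speed geodesic, characterized metrically: the curve locally realizes the
Riemannian distance, `d(c s₁, c s₂) = |s₁ − s₂|`. -/
def IsUnitSpeedGeodesicOn {M : Type*} [MetricSpace M] (c : ℝ → M) (I : Set ℝ) : Prop :=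
  ∀ t ∈ I, ∃ ε > 0, ∀ s₁ ∈ I, ∀ s₂ ∈ I,
    |s₁ - t| < ε → |s₂ - t| < ε → dist (c s₁) (c s₂) = |s₁ - s₂|

/-- let `V = ℝ × M` with `g = −dt² + γ`, `(M, d_γ)` the Riemannian distance.
If `c : [0, δ) → M` is an inextendible unit-speed geodesic with `δ < ∞`, `0 < t₁ < t₂` with
`δ < (t₂ − t₁)/2`, then compactness of the causal diamond
`J⁺((−t₁, c 0)) ∩ J⁻((t₂, c 0))` — which contains the causal curve `s ↦ (s − t₁, c s)` —
is contradictory: the closure of `c([0, δ))` would be compact, contradicting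
inextendibility.  Hence global hyperbolicity of `(V, g)` implies completeness of `(M, γ)`. -/
theorem compact_causal_diamond_contradicts_inextendible_geodesic
    {M : Type*} [MetricSpace M]
    (δ t₁ t₂ : ℝ) (hδ : 0 < δ) (ht₁ : 0 < t₁) (ht₁₂ : t₁ < t₂) (hδ' : δ < (t₂ - t₁) / 2)
    (c : ℝ → M)
    (hgeo : IsUnitSpeedGeodesicOn c (Ico 0 δ))
    -- `c` is inextendible at `s = δ`: it has no limit there
    (hinext : ¬ ∃ p : M, ∀ ε > 0, ∃ η > 0, ∀ s ∈ Ico (0 : ℝ) δ, δ - η < s →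
      dist (c s) p < ε)
    -- the causal diamond `J⁺((−t₁, c 0)) ∩ J⁻((t₂, c 0))` is compact
    (hcompact : IsCompact {w : ℝ × M | causalLE (-t₁, c 0) w ∧ causalLE w (t₂, c 0)}) :
    False := by
  -- Step 1: c is globally 1-Lipschitz on [0, δ)
  have key : ∀ s₁ ∈ Ico (0:ℝ) δ, ∀ s₂ ∈ Ico (0:ℝ) δ, s₁ ≤ s₂ →
      dist (c s₁) (c s₂) ≤ s₂ - s₁ := by
    intro s₁ hs₁ s₂ hs₂ h12
    have hsub : Icc s₁ s₂ ⊆ Ico 0 δ := fun t ht => ⟨hs₁.1.trans ht.1, lt_of_le_of_lt ht.2 hs₂.2⟩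
    set A : Set ℝ := {t | t ∈ Icc s₁ s₂ ∧ dist (c s₁) (c t) ≤ t - s₁} with hA
    have hne : s₁ ∈ A := ⟨⟨le_refl _, h12⟩, by simp⟩
    have hbdd : BddAbove A := ⟨s₂, fun t ht => ht.1.2⟩
    set u := sSup A with hu
    have huI : u ∈ Icc s₁ s₂ := ⟨le_csSup hbdd hne, csSup_le ⟨s₁, hne⟩ (fun t ht => ht.1.2)⟩
    have huδ : u ∈ Ico 0 δ := hsub huI
    obtain ⟨ε, hε, hloc⟩ := hgeo u huδ
    have huA : dist (c s₁) (c u) ≤ u - s₁ := by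
      obtain ⟨u', hu'A, hu'⟩ := exists_lt_of_lt_csSup ⟨s₁, hne⟩ (show u - ε < u by linarith)
      have hu'le : u' ≤ u := le_csSup hbdd hu'A
      have h1 : dist (c u') (c u) = |u' - u| :=
        hloc u' (hsub hu'A.1) u huδ
          (by rw [abs_sub_lt_iff]; constructor <;> linarith) (by simp [hε])
      calc dist (c s₁) (c u) ≤ dist (c s₁) (c u') + dist (c u') (c u) := dist_triangle _ _ _
        _ ≤ (u' - s₁) + |u' - u| := by rw [h1]; gcongr; exact hu'A.2
        _ = u - s₁ := by rw [abs_of_nonpos (by linarith)]; ring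
    rcases eq_or_lt_of_le huI.2 with heq | hlt
    · rw [← heq]; exact huA
    · exfalso
      set t := min s₂ (u + ε/2) with ht
      have htmin : t ≤ u + ε/2 := min_le_right _ _
      have htu : u < t := lt_min hlt (by linarith)
      have htI : t ∈ Icc s₁ s₂ := ⟨huI.1.trans htu.le, min_le_left _ _⟩
      have h2 : dist (c u) (c t) = |u - t| :=
        hloc u huδ t (hsub htI) (by simp [hε])
          (by rw [abs_sub_lt_iff]; constructor <;> linarith)
      have htA : t ∈ A := by
        refine ⟨htI, ?_⟩
        calc dist (c s₁) (c t) ≤ dist (c s₁) (c u) + dist (c u) (c t) := dist_triangle _ _ _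
          _ ≤ (u - s₁) + |u - t| := by rw [h2]; gcongr
          _ = t - s₁ := by rw [abs_of_nonpos (by linarith)]; ring
      exact absurd (le_csSup hbdd htA) (not_le.2 htu)
  have key' : ∀ a ∈ Ico (0:ℝ) δ, ∀ b ∈ Ico (0:ℝ) δ, dist (c a) (c b) ≤ |a - b| := by
    intro a ha b hb
    rcases le_total a b with h | h
    · rw [abs_of_nonpos (by linarith), neg_sub]; exact key a ha b hb h
    · rw [abs_of_nonneg (by linarith), dist_comm]; exact key b hb a ha h
  -- clamping estimate
  have hclamp : ∀ s ∈ Ico (0:ℝ) δ, ∀ a b : ℝ,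
      dist (c (min s (max a 0))) (c (min s (max b 0))) ≤ |a - b| := by
    intro s hs a b
    have hmem : ∀ y : ℝ, min s (max y 0) ∈ Ico (0:ℝ) δ := fun y =>
      ⟨le_min hs.1 (le_max_right _ _), lt_of_le_of_lt (min_le_left _ _) hs.2⟩
    calc dist (c (min s (max a 0))) (c (min s (max b 0)))
        ≤ |min s (max a 0) - min s (max b 0)| := key' _ (hmem a) _ (hmem b)
      _ ≤ max |s - s| |max a 0 - max b 0| := abs_min_sub_min_le_max _ _ _ _
      _ ≤ |a - b| := max_le (by simpa using abs_nonneg (a - b)) (abs_max_sub_max_le_abs a b 0)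
  -- Step 2: the causal curve lies in the diamond
  have hmem : ∀ s ∈ Ico (0:ℝ) δ,
      (s - t₁, c s) ∈ {w : ℝ × M | causalLE (-t₁, c 0) w ∧ causalLE w (t₂, c 0)} := by
    intro s hs
    have hs0 : 0 ≤ s := hs.1
    constructor
    · refine ⟨show -t₁ ≤ s - t₁ by linarith [hs.1], fun r => c (min s (max (r + t₁) 0)), ?_, ?_, ?_⟩
      · show c (min s (max (-t₁ + t₁) 0)) = c 0
        congr 1
        rw [neg_add_cancel, max_self, min_eq_right hs0]
      · show c (min s (max (s - t₁ + t₁) 0)) = c s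
        congr 1
        rw [sub_add_cancel, max_eq_left hs0, min_self]
      · rw [lipschitzOnWith_iff_dist_le_mul]
        intro a _ b _
        rw [NNReal.coe_one, one_mul, Real.dist_eq]
        calc dist (c (min s (max (a + t₁) 0))) (c (min s (max (b + t₁) 0)))
            ≤ |(a + t₁) - (b + t₁)| := hclamp s hs _ _
          _ = |a - b| := by ring_nf
    · refine ⟨show s - t₁ ≤ t₂ by linarith [hs.2], fun r => c (min s (max (2*s - t₁ - r) 0)), ?_, ?_, ?_⟩
      · show c (min s (max (2*s - t₁ - (s - t₁)) 0)) = c s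
        congr 1
        have : 2*s - t₁ - (s - t₁) = s := by ring
        rw [this, max_eq_left hs0, min_self]
      · show c (min s (max (2*s - t₁ - t₂) 0)) = c 0
        congr 1
        have h1 : 2*s - t₁ - t₂ ≤ 0 := by linarith [hs.2]
        rw [max_eq_right h1, min_eq_right hs0]
      · rw [lipschitzOnWith_iff_dist_le_mul]
        intro a _ b _
        rw [NNReal.coe_one, one_mul, Real.dist_eq]
        calc dist (c (min s (max (2*s - t₁ - a) 0))) (c (min s (max (2*s - t₁ - b) 0)))
            ≤ |(2*s - t₁ - a) - (2*s - t₁ - b)| := hclamp s hs _ _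
          _ = |a - b| := by rw [show (2*s - t₁ - a) - (2*s - t₁ - b) = -(a - b) by ring, abs_neg]
  -- Step 3: project to a compact set in M
  have hKcomp : IsCompact (Prod.snd ''
      {w : ℝ × M | causalLE (-t₁, c 0) w ∧ causalLE w (t₂, c 0)}) :=
    hcompact.image continuous_snd
  have hK : ∀ s ∈ Ico (0:ℝ) δ, c s ∈ Prod.snd ''
      {w : ℝ × M | causalLE (-t₁, c 0) w ∧ causalLE w (t₂, c 0)} :=
    fun s hs => ⟨(s - t₁, c s), hmem s hs, rfl⟩
  -- Step 4: Cauchy sequence converging in the compact set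
  set seq : ℕ → ℝ := fun n => δ - δ / (n + 1) with hseq
  have hseqmem : ∀ n, seq n ∈ Ico (0:ℝ) δ := by
    intro n
    have h1 : (0:ℝ) < (n:ℝ) + 1 := by positivity
    constructor
    · have : δ / ((n:ℝ) + 1) ≤ δ := div_le_self hδ.le (by linarith [Nat.cast_nonneg (α := ℝ) n])
      simp only [hseq]; linarith
    · have : 0 < δ / ((n:ℝ) + 1) := div_pos hδ h1
      simp only [hseq]; linarith
  have htend : Filter.Tendsto seq Filter.atTop (nhds δ) := by
    have h0 : Filter.Tendsto (fun n : ℕ => δ / ((n:ℝ) + 1)) Filter.atTop (nhds 0) := by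
      simpa [div_eq_mul_inv] using tendsto_one_div_add_atTop_nhds_zero_nat.const_mul δ
    simpa using Filter.Tendsto.sub (tendsto_const_nhds (x := δ)) h0
  clear_value seq
  have hcauchy : CauchySeq (fun n => c (seq n)) := by
    rw [Metric.cauchySeq_iff']
    intro ε hε
    obtain ⟨N, hN⟩ := Metric.cauchySeq_iff'.mp htend.cauchySeq ε hε
    refine ⟨N, fun n hn => ?_⟩
    calc dist (c (seq n)) (c (seq N)) ≤ |seq n - seq N| :=
          key' _ (hseqmem n) _ (hseqmem N)
      _ = dist (seq n) (seq N) := (Real.dist_eq _ _).symm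
      _ < ε := hN n hn
  obtain ⟨p, _, hp⟩ := cauchySeq_tendsto_of_isComplete hKcomp.isComplete
    (fun n => hK _ (hseqmem n)) hcauchy
  -- Step 5: contradiction with inextendibility
  apply hinext
  refine ⟨p, fun ε hε => ⟨ε/2, by linarith, fun s hs hsη => ?_⟩⟩
  have h1 : ∀ᶠ n in Filter.atTop, δ - ε/2 < seq n :=
    htend.eventually (eventually_gt_nhds (by linarith))
  have h2 : ∀ᶠ n in Filter.atTop, dist (c (seq n)) p < ε/2 :=
    Metric.tendsto_nhds.mp hp (ε/2) (by linarith)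
  obtain ⟨n, hn1, hn2⟩ := (h1.and h2).exists
  have h3 : seq n < δ := (hseqmem n).2
  have h4 : s < δ := hs.2
  have hsn : |s - seq n| < ε/2 := by
    rw [abs_sub_lt_iff]
    constructor <;> linarith
  calc dist (c s) p ≤ dist (c s) (c (seq n)) + dist (c (seq n)) p := dist_triangle _ _ _
    _ ≤ |s - seq n| + dist (c (seq n)) p := by gcongr; exact key' _ hs _ (hseqmem n)
    _ < ε/2 + ε/2 := by gcongr
    _ = ε := by ring
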